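/- Suppose a C¹ function y : [0,T] → ℝ≥0 and nonnegative continuous functions g, h satisfy (1/2) d/dt (y(t)²) + g(t) ≤ h(t) + s(t)·y(t) for a nonnegative continuous s. Then y(T)² + 2∫₀ᵀ g dt ≤ y(0)² + 2∫₀ᵀ h dt + 2∫₀ᵀ s(t) y(t) dt, and consequently √(y(T)² + 2∫₀ᵀ g dt) ≤ (y(0)² + 2 sup_{0≤t≤T}∫₀ᵗ h ds)^{1/2} + ∫₀ᵀ s dt. -/

import Mathlib

/-!
Integrating `(1/2) (y²)' + g ≤ h + s y` over `[0, t]` gives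
`y(t)² + 2∫₀ᵗ g ≤ A + 2∫₀ᵗ s y` with `A = y(0)² + 2∫₀ᵀ h`, which is also the supremum of
`y(0)² + 2∫₀ᵗ h` since `h ≥ 0`. For `A > 0` the function `u = A + 2∫₀ᵗ s y` dominates `y²`,
so `(√u)' = s y / √u ≤ s`, and integrating gives `√u(T) ≤ √A + ∫₀ᵀ s`; the case `A = 0`
follows by replacing `A` with `A + ε²`.
-/

open MeasureTheory Set

theorem sq_add_two_mul_integral_le_of_half_deriv_sq_le {y g h k : ℝ → ℝ} {a b : ℝ}
    (hab : a ≤ b) (hy : Differentiable ℝ y) (hg : IntervalIntegrable g volume a b)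
    (hh : IntervalIntegrable h volume a b) (hk : IntervalIntegrable k volume a b)
    (hineq : ∀ t ∈ Ioo a b, (1 / 2) * deriv (fun r => y r ^ 2) t + g t ≤ h t + k t) :
    y b ^ 2 + 2 * ∫ t in a..b, g t ≤
      y a ^ 2 + 2 * (∫ t in a..b, h t) + 2 * ∫ t in a..b, k t := by
  have hy2 : Differentiable ℝ fun r => y r ^ 2 := hy.pow 2
  have hφ : IntervalIntegrable (fun t => 2 * (h t + k t - g t)) volume a b :=
    ((hh.add hk).sub hg).const_mul 2
  have hle := intervalIntegral.sub_le_integral_of_hasDeriv_right_of_le hab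
    hy2.continuous.continuousOn (fun t _ => (hy2 t).hasDerivAt.hasDerivWithinAt)
    ((intervalIntegrable_iff_integrableOn_Icc_of_le hab).1 hφ)
    (fun t ht => by linarith [hineq t ht])
  rw [intervalIntegral.integral_const_mul, intervalIntegral.integral_sub (hh.add hk) hg,
    intervalIntegral.integral_add hh hk] at hle
  linarith

theorem monotoneOn_integral_of_nonneg {h : ℝ → ℝ} {a b : ℝ}
    (hh : IntervalIntegrable h volume a b) (hnn : ∀ t ∈ Ioc a b, 0 ≤ h t) :
    MonotoneOn (fun r => ∫ t in a..r, h t) (Icc a b) := fun _ hx _ hr hxr =>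
  intervalIntegral.integral_mono_interval le_rfl hx.1 hxr
    ((ae_restrict_iff' measurableSet_Ioc).2 (Filter.Eventually.of_forall fun t ht =>
      hnn t (Ioc_subset_Ioc_right hr.2 ht)))
    (hh.mono_set (uIcc_subset_uIcc left_mem_uIcc (mem_uIcc_of_le hr.1 hr.2)))

theorem sSup_image_integral_Icc_of_nonneg {h : ℝ → ℝ} {a b : ℝ} (hab : a ≤ b)
    (hh : IntervalIntegrable h volume a b) (hnn : ∀ t ∈ Ioc a b, 0 ≤ h t) :
    sSup ((fun r => ∫ t in a..r, h t) '' Icc a b) = ∫ t in a..b, h t :=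
  ((monotoneOn_integral_of_nonneg hh hnn).map_isGreatest (isGreatest_Icc hab)).csSup_eq

theorem sqrt_add_two_mul_integral_le {χ B : ℝ → ℝ} {A a b : ℝ} (hA : 0 < A) (hab : a ≤ b)
    (hχ : Continuous χ) (hB : Continuous B) (hχnn : ∀ t, 0 ≤ χ t) (hBnn : ∀ t, 0 ≤ B t)
    (hle : ∀ t ∈ Icc a b, χ t ^ 2 ≤ A + 2 * ∫ r in a..t, B r * χ r) :
    √(A + 2 * ∫ t in a..b, B t * χ t) ≤ √A + ∫ t in a..b, B t := by
  set u : ℝ → ℝ := fun t => A + 2 * ∫ r in a..t, B r * χ r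
  have hu_pos : ∀ t ∈ Icc a b, 0 < u t := fun t ht => by
    have : 0 ≤ ∫ r in a..t, B r * χ r :=
      intervalIntegral.integral_nonneg ht.1 fun r _ => mul_nonneg (hBnn r) (hχnn r)
    simp only [u]
    linarith
  have hsqrt_deriv : ∀ t ∈ Icc a b,
      HasDerivAt (fun t => √(u t)) (2 * (B t * χ t) / (2 * √(u t))) t := fun t ht =>
    ((((hB.mul hχ).integral_hasStrictDerivAt a t).hasDerivAt.const_mul 2).const_add A).sqrt
      (hu_pos t ht).ne'
  have hslope : ∀ t ∈ Icc a b, 2 * (B t * χ t) / (2 * √(u t)) ≤ B t := fun t ht => by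
    have hroot : 0 < √(u t) := Real.sqrt_pos.2 (hu_pos t ht)
    have hχu : χ t ≤ √(u t) := (le_abs_self _).trans (Real.abs_le_sqrt (hle t ht))
    rw [div_le_iff₀ (by positivity)]
    nlinarith [mul_le_mul_of_nonneg_left hχu (hBnn t)]
  have hint := intervalIntegral.sub_le_integral_of_hasDeriv_right_of_le hab
    (fun t ht => (hsqrt_deriv t ht).continuousAt.continuousWithinAt)
    (fun t ht => (hsqrt_deriv t (Ioo_subset_Icc_self ht)).hasDerivWithinAt)
    hB.integrableOn_Icc (fun t ht => hslope t (Ioo_subset_Icc_self ht))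
  simp only [u, intervalIntegral.integral_same, mul_zero, add_zero] at hint
  linarith

theorem sqrt_sq_add_le_of_sq_add_le_integral {χ B R : ℝ → ℝ} {A a b : ℝ} (hA : 0 ≤ A)
    (hab : a ≤ b) (hχ : Continuous χ) (hB : Continuous B) (hχnn : ∀ t, 0 ≤ χ t)
    (hBnn : ∀ t, 0 ≤ B t) (hRnn : ∀ t ∈ Icc a b, 0 ≤ R t)
    (hle : ∀ t ∈ Icc a b, χ t ^ 2 + R t ≤ A + 2 * ∫ r in a..t, B r * χ r) :
    √(χ b ^ 2 + R b) ≤ √A + ∫ t in a..b, B t := by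
  refine le_of_forall_pos_le_add fun ε hε => ?_
  have hsqrt_add : √(A + ε ^ 2) ≤ √A + ε :=
    Real.sqrt_le_iff.2 ⟨by positivity, by nlinarith [Real.sq_sqrt hA, Real.sqrt_nonneg A]⟩
  calc √(χ b ^ 2 + R b) ≤ √(A + ε ^ 2 + 2 * ∫ t in a..b, B t * χ t) :=
        Real.sqrt_le_sqrt (by linarith [hle b ⟨hab, le_rfl⟩, sq_nonneg ε])
    _ ≤ √(A + ε ^ 2) + ∫ t in a..b, B t :=
        sqrt_add_two_mul_integral_le (by positivity) hab hχ hB hχnn hBnn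
          fun t ht => by linarith [hle t ht, hRnn t ht, sq_nonneg ε]
    _ ≤ √A + (∫ t in a..b, B t) + ε := by linarith

/-- Continuous-in-time energy estimate: if a `C¹` nonnegative `y` and nonnegative
continuous `g, h, s` satisfy `(1/2) d/dt(y²) + g ≤ h + s·y` on `[0,T]`, then
`y(T)² + 2∫₀ᵀ g ≤ y(0)² + 2∫₀ᵀ h + 2∫₀ᵀ s y`, and consequently (by the
Gronwall-type Lemma 5.1)
`√(y(T)² + 2∫₀ᵀ g) ≤ (y(0)² + 2 sup_{0≤t≤T}∫₀ᵗ h)^{1/2} + ∫₀ᵀ s`. -/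
theorem stmt16 (T : ℝ) (hT : 0 < T) (y g h s : ℝ → ℝ)
    (hy : ContDiff ℝ 1 y) (hynn : ∀ t, 0 ≤ y t)
    (hg : Continuous g) (hh : Continuous h) (hs : Continuous s)
    (hgnn : ∀ t, 0 ≤ g t) (hhnn : ∀ t, 0 ≤ h t) (hsnn : ∀ t, 0 ≤ s t)
    (hineq : ∀ t ∈ Set.Icc (0:ℝ) T,
      (1 / 2) * deriv (fun r => y r ^ 2) t + g t ≤ h t + s t * y t) :
    (y T ^ 2 + 2 * ∫ t in (0:ℝ)..T, g t ≤
        y 0 ^ 2 + 2 * (∫ t in (0:ℝ)..T, h t) + 2 * ∫ t in (0:ℝ)..T, s t * y t) ∧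
      Real.sqrt (y T ^ 2 + 2 * ∫ t in (0:ℝ)..T, g t) ≤
        Real.sqrt (y 0 ^ 2 + 2 * sSup ((fun r => ∫ t in (0:ℝ)..r, h t) '' Set.Icc 0 T)) +
          ∫ t in (0:ℝ)..T, s t := by
  have hTmem : T ∈ Icc 0 T := ⟨hT.le, le_rfl⟩
  have energy : ∀ τ ∈ Icc 0 T, y τ ^ 2 + 2 * ∫ t in (0:ℝ)..τ, g t ≤
      y 0 ^ 2 + 2 * (∫ t in (0:ℝ)..τ, h t) + 2 * ∫ t in (0:ℝ)..τ, s t * y t :=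
    fun τ hτ => sq_add_two_mul_integral_le_of_half_deriv_sq_le hτ.1
      (hy.differentiable one_ne_zero) (hg.intervalIntegrable _ _) (hh.intervalIntegrable _ _)
      ((hs.mul hy.continuous).intervalIntegrable _ _)
      fun t ht => hineq t ⟨ht.1.le, ht.2.le.trans hτ.2⟩
  have hh_int : IntervalIntegrable h volume 0 T := hh.intervalIntegrable 0 T
  have hh_mono := monotoneOn_integral_of_nonneg hh_int fun t _ => hhnn t
  refine ⟨energy T hTmem, ?_⟩
  rw [sSup_image_integral_Icc_of_nonneg hT.le hh_int fun t _ => hhnn t]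
  refine sqrt_sq_add_le_of_sq_add_le_integral ?_ hT.le hy.continuous hs hynn hsnn
    (fun t ht => mul_nonneg zero_le_two (intervalIntegral.integral_nonneg ht.1 fun r _ => hgnn r))
    fun t ht => by linarith [energy t ht, hh_mono ht hTmem ht.2]
  have : 0 ≤ ∫ t in (0:ℝ)..T, h t := intervalIntegral.integral_nonneg hT.le fun t _ => hhnn t
  positivity
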